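/- Let α ∈ (0,1), let (X₁,Y₁), …, (X_{n+1},Y_{n+1}) be exchangeable random pairs taking values in ℝ^D × ℝ (e.g., i.i.d.), and let f : ℝ^D → ℝ be a fixed measurable function (a regression model trained on independent data). Define the scores s_i = |Y_i − f(X_i)| for i = 1, …, n+1 and let q̂ be the ⌈(n+1)(1−α)⌉-th smallest value among s₁, …, s_n (with q̂ = +∞ if ⌈(n+1)(1−α)⌉ > n). Then P( f(X_{n+1}) − q̂ ≤ Y_{n+1} ≤ f(X_{n+1}) + q̂ ) ≥ 1 − α. -/

import Mathlib

/-!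
Let `k = ⌈(n+1)(1-α)⌉`. The test point is covered as soon as fewer than `k` of the `n + 1`
scores lie strictly below its own score. For every outcome at least `k` indices `j` (those of the
`k` smallest scores) have fewer than `k` scores strictly below `s j`, so the `n + 1` events
"fewer than `k` scores lie below `s j`" have measures summing to at least `k`. By exchangeability
they all have the same measure, which is therefore at least `k / (n + 1) ≥ 1 - α`.
-/

open MeasureTheory

/-- The `k`-th smallest element (1-indexed) of a multiset of reals. -/
noncomputable def kthSmallest (m : Multiset ℝ) (k : ℕ) : ℝ :=
  (m.sort (· ≤ ·)).getD (k - 1) 0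

open Finset
open scoped ENNReal

namespace List

variable {α : Type*} {l : List α} {i : ℕ}

theorem le_length_filter_of_forall_mem_take {p : α → Bool} (hi : i ≤ l.length)
    (h : ∀ y ∈ l.take i, p y) : i ≤ (l.filter p).length := by
  calc i = ((l.take i).filter p).length := by rw [filter_eq_self.2 h, length_take_of_le hi]
    _ ≤ (l.filter p).length := ((take_sublist i l).filter p).length_le

variable [LinearOrder α]

theorem SortedLE.le_getElem_of_mem_take (hl : l.SortedLE) (hi : i < l.length) :
    ∀ y ∈ l.take (i + 1), y ≤ l[i] := by
  intro y hy
  obtain ⟨j, hj, rfl⟩ := getElem_of_mem hy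
  rw [getElem_take]
  exact hl.getElem_le_getElem_of_le (by simp at hj; omega)

theorem SortedLE.getElem_le_of_mem_drop (hl : l.SortedLE) (hi : i < l.length) :
    ∀ y ∈ l.drop i, l[i] ≤ y := by
  intro y hy
  obtain ⟨j, hj, rfl⟩ := getElem_of_mem hy
  rw [getElem_drop]
  exact hl.getElem_le_getElem_of_le (by omega)

theorem SortedLE.length_filter_lt_le (hl : l.SortedLE) (hi : i < l.length) {x : α}
    (hx : x ≤ l[i]) : (l.filter (· < x)).length ≤ i := by
  have hdrop : (l.drop i).filter (· < x) = [] := filter_eq_nil_iff.2 fun y hy => by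
    simpa using hx.trans (hl.getElem_le_of_mem_drop hi y hy)
  calc (l.filter (· < x)).length
      = ((l.take i).filter (· < x) ++ (l.drop i).filter (· < x)).length := by
        rw [← filter_append, take_append_drop]
    _ ≤ (l.take i).length := by rw [hdrop, append_nil]; exact length_filter_le _ _
    _ ≤ i := length_take_le _ _

end List

namespace Multiset

variable {α : Type*}

theorem card_filter_eq_length_filter_sort (m : Multiset α) (r : α → α → Prop) [DecidableRel r]
    [IsTrans α r] [Std.Antisymm r] [Std.Total r] (p : α → Prop) [DecidablePred p] :
    card (m.filter p) = ((m.sort r).filter (p ·)).length := by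
  conv_lhs => rw [← sort_eq m r]
  rw [filter_coe, coe_card]

theorem sortedLE_sort [LinearOrder α] (m : Multiset α) : (m.sort (· ≤ ·)).SortedLE :=
  (pairwise_sort m _).sortedLE

theorem card_filter_map_univ {ι : Type*} [Fintype ι] (t : ι → α) (p : α → Prop)
    [DecidablePred p] : card ((univ.val.map t).filter p) = #{i | p (t i)} := by
  rw [filter_map, card_map]
  rfl

end Multiset

section KthSmallest

variable {m : Multiset ℝ} {k : ℕ}

theorem kthSmallest_add_one {i : ℕ} (hi : i < (m.sort (· ≤ ·)).length) :
    kthSmallest m (i + 1) = (m.sort (· ≤ ·))[i] := by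
  rw [kthSmallest, Nat.add_sub_cancel, List.getD_eq_getElem _ _ hi]

theorem le_kthSmallest_iff (hk₀ : 1 ≤ k) (hk : k ≤ Multiset.card m) {x : ℝ} :
    x ≤ kthSmallest m k ↔ Multiset.card (m.filter (· < x)) < k := by
  obtain ⟨i, rfl⟩ := Nat.exists_eq_add_of_le' hk₀
  have hi : i < (m.sort (· ≤ ·)).length := by simpa using hk
  rw [kthSmallest_add_one hi, m.card_filter_eq_length_filter_sort (· ≤ ·), Nat.lt_succ_iff]
  refine ⟨(m.sortedLE_sort).length_filter_lt_le hi, fun hcount => not_lt.1 fun hlt => ?_⟩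
  have := List.le_length_filter_of_forall_mem_take (p := (· < x)) hi fun y hy => by
    simpa using ((m.sortedLE_sort).le_getElem_of_mem_take hi y hy).trans_lt hlt
  omega

theorem le_card_filter_le_kthSmallest (hk : k ≤ Multiset.card m) :
    k ≤ Multiset.card (m.filter (· ≤ kthSmallest m k)) := by
  cases k with
  | zero => exact Nat.zero_le _
  | succ i =>
    have hi : i < (m.sort (· ≤ ·)).length := by simpa using hk
    rw [kthSmallest_add_one hi, m.card_filter_eq_length_filter_sort (· ≤ ·)]
    exact List.le_length_filter_of_forall_mem_take hi fun y hy => by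
      simpa using (m.sortedLE_sort).le_getElem_of_mem_take hi y hy

end KthSmallest

section StrictRank

variable {ι α : Type*} [Fintype ι] [LinearOrder α]

def strictRank (t : ι → α) (j : ι) : ℕ := #{i | t i < t j}

theorem strictRank_comp_perm (t : ι → α) (σ : Equiv.Perm ι) (j : ι) :
    strictRank (t ∘ σ) j = strictRank t (σ j) :=
  card_equiv σ (by simp)

theorem strictRank_last {n : ℕ} (t : Fin (n + 1) → α) :
    strictRank t (Fin.last n) = #{i : Fin n | t i.castSucc < t (Fin.last n)} := by
  simp only [strictRank, card_filter, Fin.sum_univ_castSucc, lt_irrefl, if_false, add_zero]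

end StrictRank

theorem le_card_filter_strictRank_lt {ι : Type*} [Fintype ι] (t : ι → ℝ) {k : ℕ}
    (hk : k ≤ Fintype.card ι) : k ≤ #{j | strictRank t j < k} := by
  rcases Nat.eq_zero_or_pos k with rfl | hk₀
  · exact Nat.zero_le _
  have hcard : k ≤ Multiset.card (univ.val.map t) := by simpa using hk
  set q := kthSmallest (univ.val.map t) k
  calc k ≤ #{j | t j ≤ q} := by
        simpa [Multiset.card_filter_map_univ] using le_card_filter_le_kthSmallest hcard
    _ ≤ #{j | strictRank t j < k} := card_le_card fun j hj => mem_filter.2 ⟨mem_univ j, by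
        simpa [strictRank, Multiset.card_filter_map_univ] using
          (le_kthSmallest_iff hk₀ hcard).1 (mem_filter.1 hj).2⟩

theorem measurableSet_strictRank_lt {ι : Type*} [Fintype ι] (j : ι) (k : ℕ) :
    MeasurableSet {t : ι → ℝ | strictRank t j < k} := by
  have : Measurable fun t : ι → ℝ => strictRank t j := by
    simp only [strictRank, card_filter]
    exact Finset.measurable_sum _ fun i _ =>
      Measurable.ite (measurableSet_lt (measurable_pi_apply i) (measurable_pi_apply j))
        measurable_const measurable_const
  exact measurableSet_lt this measurable_const

theorem MeasureTheory.natCast_mul_measure_univ_le_sum_measure {Ω ι : Type*} [MeasurableSpace Ω]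
    (μ : Measure Ω) (s : Finset ι) {A : ι → Set Ω} [∀ j, DecidablePred (· ∈ A j)]
    (hA : ∀ j ∈ s, MeasurableSet (A j)) {k : ℕ} (hk : ∀ ω, k ≤ #{j ∈ s | ω ∈ A j}) :
    k * μ Set.univ ≤ ∑ j ∈ s, μ (A j) := by
  have hcount (ω : Ω) : ∑ j ∈ s, (A j).indicator 1 ω = (#{j ∈ s | ω ∈ A j} : ℝ≥0∞) := by
    simp [Set.indicator_apply]
  calc k * μ Set.univ = ∫⁻ _, (k : ℝ≥0∞) ∂μ := by simp
    _ ≤ ∫⁻ ω, ∑ j ∈ s, (A j).indicator 1 ω ∂μ :=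
        lintegral_mono fun ω => (hcount ω).symm ▸ Nat.cast_le.2 (hk ω)
    _ = ∑ j ∈ s, μ (A j) := by
        rw [lintegral_finsetSum _ fun j hj => measurable_one.indicator (hA j hj)]
        exact Finset.sum_congr rfl fun j hj => lintegral_indicator_one (hA j hj)

section Exchangeable

variable {Ω ι β γ : Type*} [MeasurableSpace Ω] [MeasurableSpace β] [MeasurableSpace γ]
  {μ : Measure Ω} {Z : ι → Ω → β}

def Exchangeable (Z : ι → Ω → β) (μ : Measure Ω) : Prop :=
  ∀ σ : Equiv.Perm ι, μ.map (fun ω i => Z (σ i) ω) = μ.map (fun ω i => Z i ω)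

theorem Exchangeable.comp (hZ : Exchangeable Z μ) (hZm : ∀ i, Measurable (Z i)) {g : β → γ}
    (hg : Measurable g) : Exchangeable (fun i ω => g (Z i ω)) μ := by
  intro σ
  have hG : Measurable fun (v : ι → β) i => g (v i) := by fun_prop
  have := congrArg (Measure.map fun (v : ι → β) i => g (v i)) (hZ σ)
  rwa [Measure.map_map hG (by fun_prop), Measure.map_map hG (by fun_prop)] at this

theorem Exchangeable.measure_preimage_perm (hZ : Exchangeable Z μ)
    (hZm : ∀ i, Measurable (Z i)) (σ : Equiv.Perm ι) {B : Set (ι → β)} (hB : MeasurableSet B) :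
    μ ((fun ω i => Z (σ i) ω) ⁻¹' B) = μ ((fun ω i => Z i ω) ⁻¹' B) := by
  rw [← Measure.map_apply (by fun_prop) hB, hZ σ, Measure.map_apply (by fun_prop) hB]

end Exchangeable

section ScoreRanks

variable {Ω ι : Type*} [MeasurableSpace Ω] [Fintype ι] {μ : Measure Ω} {S : ι → Ω → ℝ}

theorem Exchangeable.measure_strictRank_lt_eq (hS : Exchangeable S μ)
    (hSm : ∀ i, Measurable (S i)) (k : ℕ) (j j' : ι) :
    μ {ω | strictRank (fun i => S i ω) j < k} = μ {ω | strictRank (fun i => S i ω) j' < k} := by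
  classical
  have hswap : {ω | strictRank (fun i => S i ω) j < k}
      = (fun ω i => S (Equiv.swap j' j i) ω) ⁻¹' {t | strictRank t j' < k} := by
    ext ω
    show _ ↔ strictRank ((fun i => S i ω) ∘ Equiv.swap j' j) j' < k
    rw [strictRank_comp_perm, Equiv.swap_apply_left]
    exact Iff.rfl
  rw [hswap, hS.measure_preimage_perm hSm _ (measurableSet_strictRank_lt j' k)]
  rfl

theorem Exchangeable.le_card_mul_measure_strictRank_lt [IsProbabilityMeasure μ]
    (hS : Exchangeable S μ) (hSm : ∀ i, Measurable (S i)) {k : ℕ} (hk : k ≤ Fintype.card ι)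
    (j : ι) : (k : ℝ≥0∞) ≤ Fintype.card ι * μ {ω | strictRank (fun i => S i ω) j < k} := by
  calc (k : ℝ≥0∞) = k * μ Set.univ := by simp
    _ ≤ ∑ j', μ {ω | strictRank (fun i => S i ω) j' < k} :=
        natCast_mul_measure_univ_le_sum_measure μ univ
          (A := fun j' => {ω | strictRank (fun i => S i ω) j' < k})
          (fun j' _ => measurable_pi_lambda _ hSm (measurableSet_strictRank_lt j' k))
          fun ω => le_card_filter_strictRank_lt (fun i => S i ω) hk
    _ = Fintype.card ι * μ {ω | strictRank (fun i => S i ω) j < k} := by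
        simp [hS.measure_strictRank_lt_eq hSm k _ j]

end ScoreRanks

theorem EReal.coe_abs_sub_le_iff {a b : ℝ} {q : EReal} :
    ((|b - a| : ℝ) : EReal) ≤ q ↔ (a : EReal) - q ≤ b ∧ (b : EReal) ≤ a + q := by
  induction q using EReal.rec with
  | bot => simp
  | coe q =>
    rw [← EReal.coe_sub, ← EReal.coe_add]
    norm_cast
    rw [abs_sub_le_iff]
    constructor <;> rintro ⟨h₁, h₂⟩ <;> constructor <;> linarith
  | top => simp

/-- Marginal coverage of the naive split conformal method: for exchangeable pairs
`(X i, Y i)` in `ℝ^D × ℝ` and a fixed measurable regression function `f`, with scores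
`s i = |Y i - f (X i)|` and `q̂` the `⌈(n+1)(1-α)⌉`-th smallest calibration score
(`+∞` if `⌈(n+1)(1-α)⌉ > n`), we have
`P(f(X_{n+1}) - q̂ ≤ Y_{n+1} ≤ f(X_{n+1}) + q̂) ≥ 1 - α`. -/
theorem naive_conformal_coverage
    {Ω : Type*} [MeasurableSpace Ω] (μ : Measure Ω) [IsProbabilityMeasure μ]
    (D n : ℕ) (α : ℝ) (hα : α ∈ Set.Ioo (0 : ℝ) 1)
    (X : Fin (n + 1) → Ω → (Fin D → ℝ)) (Y : Fin (n + 1) → Ω → ℝ)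
    (hXY : ∀ i, Measurable (fun ω => (X i ω, Y i ω)))
    (hexch : ∀ σ : Equiv.Perm (Fin (n + 1)),
      Measure.map (fun ω => fun i => (X (σ i) ω, Y (σ i) ω)) μ
        = Measure.map (fun ω => fun i => (X i ω, Y i ω)) μ)
    (f : (Fin D → ℝ) → ℝ) (hf : Measurable f) :
    μ {ω |
        ((f (X (Fin.last n) ω) : ℝ) : EReal) -
            (if ⌈((n : ℝ) + 1) * (1 - α)⌉₊ ≤ n
              then ((kthSmallest
                  (Finset.univ.val.map
                    (fun i : Fin n => |Y (Fin.castSucc i) ω - f (X (Fin.castSucc i) ω)|))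
                  ⌈((n : ℝ) + 1) * (1 - α)⌉₊ : ℝ) : EReal)
              else (⊤ : EReal))
          ≤ ((Y (Fin.last n) ω : ℝ) : EReal)
        ∧ ((Y (Fin.last n) ω : ℝ) : EReal)
          ≤ ((f (X (Fin.last n) ω) : ℝ) : EReal) +
            (if ⌈((n : ℝ) + 1) * (1 - α)⌉₊ ≤ n
              then ((kthSmallest
                  (Finset.univ.val.map
                    (fun i : Fin n => |Y (Fin.castSucc i) ω - f (X (Fin.castSucc i) ω)|))
                  ⌈((n : ℝ) + 1) * (1 - α)⌉₊ : ℝ) : EReal)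
              else (⊤ : EReal))}
      ≥ ENNReal.ofReal (1 - α) := by
  set K := ⌈((n : ℝ) + 1) * (1 - α)⌉₊
  set S : Fin (n + 1) → Ω → ℝ := fun i ω => |Y i ω - f (X i ω)|
  have hscore : Measurable fun p : (Fin D → ℝ) × ℝ => |p.2 - f p.1| := by fun_prop
  have hSm (i : Fin (n + 1)) : Measurable (S i) := hscore.comp (hXY i)
  have hS : Exchangeable S μ := Exchangeable.comp (Z := fun i ω => (X i ω, Y i ω)) hexch hXY hscore
  have hKn : K ≤ n + 1 := Nat.ceil_le.2 (by push_cast; nlinarith [hα.1])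
  have hcover : ENNReal.ofReal (1 - α) ≤ μ {ω | strictRank (fun i => S i ω) (Fin.last n) < K} := by
    have hrank := hS.le_card_mul_measure_strictRank_lt hSm (by simpa using hKn) (Fin.last n)
    rw [Fintype.card_fin] at hrank
    have hceil : ENNReal.ofReal ((n + 1 : ℕ) * (1 - α)) ≤ K :=
      ENNReal.ofReal_le_of_le_toReal (by simpa using Nat.le_ceil _)
    rw [ENNReal.ofReal_mul (by positivity), ENNReal.ofReal_natCast] at hceil
    exact (ENNReal.mul_le_mul_iff_right (by simp) (by simp)).1 (hceil.trans hrank)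
  refine hcover.trans (measure_mono fun ω (hω : strictRank _ _ < K) => ?_)
  rw [Set.mem_ofPred_eq, ← EReal.coe_abs_sub_le_iff]
  split_ifs with hKn'
  · refine EReal.coe_le_coe_iff.2 ((le_kthSmallest_iff ?_ (by simpa using hKn')).2 ?_)
    · exact Nat.one_le_of_lt hω
    · rw [Multiset.card_filter_map_univ]
      exact (strictRank_last _).symm.trans_lt hω
  · exact le_top
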